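/- Let d be a positive integer and k a nonnegative integer. The function f : ℝ^d → ℝ defined by f(x) = L_k^{d/2-1}(2π|x|²) e^{-π|x|²} is an eigenfunction of the Fourier transform with eigenvalue (-1)^k, i.e., f̂ = (-1)^k f. -/

import Mathlib

open MeasureTheory Real Polynomial FourierTransform

/-- The generalized Laguerre polynomial `L_m^α`. -/
noncomputable def laguerre (α : ℝ) (m : ℕ) : Polynomial ℝ :=
  ∑ k ∈ Finset.range (m + 1),
    Polynomial.C ((-1 : ℝ) ^ k / (Nat.factorial k) *
      (∏ j ∈ Finset.range (m - k), (α + k + 1 + j)) / (Nat.factorial (m - k))) *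
      Polynomial.X ^ k

open scoped RealInnerProductSpace

set_option linter.unusedSectionVars false

noncomputable def lagC (α : ℝ) (k m : ℕ) : ℝ :=
  (-1 : ℝ) ^ m / (Nat.factorial m) *
      (∏ j ∈ Finset.range (k - m), (α + m + 1 + j)) / (Nat.factorial (k - m))

lemma laguerre_eq (α : ℝ) (k : ℕ) :
    laguerre α k = ∑ m ∈ Finset.range (k+1), Polynomial.C (lagC α k m) * Polynomial.X ^ m := rfl

lemma eval_laguerre (α : ℝ) (k : ℕ) (z : ℝ) :
    (laguerre α k).eval z = ∑ m ∈ Finset.range (k+1), lagC α k m * z ^ m := by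
  rw [laguerre_eq]
  simp [Polynomial.eval_finset_sum]

lemma coeff_laguerre (α : ℝ) (k m : ℕ) :
    (laguerre α k).coeff m = if m ≤ k then lagC α k m else 0 := by
  rw [laguerre_eq, Polynomial.finset_sum_coeff]
  simp only [Polynomial.coeff_C_mul, Polynomial.coeff_X_pow, mul_ite, mul_one, mul_zero]
  rw [Finset.sum_ite_eq (Finset.range (k+1)) m (lagC α k)]
  simp [Nat.lt_succ_iff]

lemma lag_rec (α : ℝ) (k : ℕ) :
    ((k : ℝ)+1) • laguerre α (k+1) =
      (Polynomial.C (α+1+k) - Polynomial.X) * laguerre α k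
        + Polynomial.X * Polynomial.derivative (laguerre α k) := by
  ext m
  rw [Polynomial.coeff_smul, Polynomial.coeff_add, sub_mul, Polynomial.coeff_sub,
    Polynomial.coeff_C_mul]
  match m with
  | 0 =>
    simp only [Polynomial.mul_coeff_zero, Polynomial.coeff_X_zero, zero_mul, sub_zero, add_zero,
      coeff_laguerre, Nat.zero_le, if_true, smul_eq_mul]
    simp only [lagC, pow_zero, Nat.sub_zero, Nat.factorial_zero, Nat.cast_one, div_one, one_mul]
    rw [Finset.prod_range_succ]
    have h1 : ((Nat.factorial (k+1) : ℝ)) = (k+1) * Nat.factorial k := by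
      rw [Nat.factorial_succ]; push_cast; ring
    have h2 : (Nat.factorial k : ℝ) ≠ 0 := Nat.cast_ne_zero.2 (Nat.factorial_ne_zero k)
    have h3 : ((k:ℝ)+1) ≠ 0 := by positivity
    simp only [h1]
    field_simp [h1]
    ring
  | Nat.succ m' =>
    rw [Polynomial.coeff_X_mul, Polynomial.coeff_X_mul, Polynomial.coeff_derivative]
    rcases lt_trichotomy (m'+1) (k+1) with hlt | heq | hgt
    · -- m'+1 ≤ k
      have hm : m' + 1 ≤ k := Nat.lt_succ_iff.mp hlt
      obtain ⟨n, rfl⟩ : ∃ n, k = m' + 1 + n := ⟨k - (m'+1), by omega⟩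
      simp only [coeff_laguerre, smul_eq_mul, Nat.succ_eq_add_one]
      rw [if_pos (by omega), if_pos (by omega), if_pos (by omega)]
      simp only [lagC]
      have e1 : m' + 1 + n + 1 - (m' + 1) = n + 1 := by omega
      have e2 : m' + 1 + n - (m' + 1) = n := by omega
      have e3 : m' + 1 + n - m' = n + 1 := by omega
      rw [e1, e2, e3]
      -- express products in terms of P := ∏ j in range n, (α + m' + 2 + j)
      set P : ℝ := ∏ j ∈ Finset.range n, (α + (m'+1 : ℕ) + 1 + j) with hP
      have p1 : (∏ j ∈ Finset.range (n+1), (α + ((m'+1 : ℕ):ℝ) + 1 + j))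
          = P * (α + (m'+1:ℕ) + 1 + n) := Finset.prod_range_succ _ _
      have p2 : (∏ j ∈ Finset.range (n+1), (α + (m' : ℕ) + 1 + j))
          = (α + m') * P + P := by
        rw [Finset.prod_range_succ']
        have h : ∀ j ∈ Finset.range n,
            (α + ((m':ℕ):ℝ) + 1 + (((j+1 : ℕ)):ℝ)) = (α + ((m'+1:ℕ):ℝ) + 1 + (j:ℝ)) := by
          intro j _; push_cast; ring
        rw [Finset.prod_congr rfl h, hP]
        push_cast; ring
      rw [p1, p2]
      have h2 : ∀ q : ℕ, (Nat.factorial q : ℝ) ≠ 0 :=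
        fun q => Nat.cast_ne_zero.2 (Nat.factorial_ne_zero q)
      have f1 : ((Nat.factorial (n+1) : ℝ)) = (n+1) * Nat.factorial n := by
        rw [Nat.factorial_succ]; push_cast; ring
      have f2 : ((Nat.factorial (m'+1) : ℝ)) = (m'+1) * Nat.factorial m' := by
        rw [Nat.factorial_succ]; push_cast; ring
      have s1 : ((-1:ℝ)) ^ (m'+1) = -(-1:ℝ)^m' := by ring
      push_cast [f1, f2, s1]
      field_simp
      ring
    · -- m'+1 = k+1
      have hm : m' = k := by omega
      subst hm
      simp only [coeff_laguerre, smul_eq_mul, Nat.succ_eq_add_one]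
      simp only [lagC, Nat.sub_self]
      simp only [Finset.range_zero, Finset.prod_empty, Nat.factorial_zero, Nat.cast_one, div_one,
        mul_one, zero_mul, mul_zero, add_zero]
      simp only [le_refl, ite_true, Nat.not_succ_le_self, ite_false]
      have f2 : ((Nat.factorial (m'+1) : ℝ)) = (m'+1) * Nat.factorial m' := by
        rw [Nat.factorial_succ]; push_cast; ring
      have h2 : ∀ q : ℕ, (Nat.factorial q : ℝ) ≠ 0 :=
        fun q => Nat.cast_ne_zero.2 (Nat.factorial_ne_zero q)
      have s1 : ((-1:ℝ)) ^ (m'+1) = -(-1:ℝ)^m' := by ring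
      push_cast [f2, s1]
      field_simp
      ring
    · -- m'+1 > k+1
      simp only [coeff_laguerre, smul_eq_mul, Nat.succ_eq_add_one]
      split_ifs <;> first | (exfalso; omega) | ring

lemma keysum (α : ℝ) (p n : ℕ) :
    ∑ i ∈ Finset.range (n+1),
        lagC α (p+n) (p+i) * 2^(p+i) * (Nat.factorial (p+i)) * lagC α (p+i) p
      = (-1:ℝ)^(p+n) * lagC α (p+n) p * 2^p := by
  have h2 : ∀ q : ℕ, (Nat.factorial q : ℝ) ≠ 0 :=
    fun q => Nat.cast_ne_zero.2 (Nat.factorial_ne_zero q)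
  have key : ∀ i ∈ Finset.range (n+1),
      lagC α (p+n) (p+i) * 2^(p+i) * (Nat.factorial (p+i)) * lagC α (p+i) p
        = ((-2:ℝ))^i * 1^(n-i) * (Nat.choose n i) *
            (((-1:ℝ)^p * (-1:ℝ)^p) * 2^p * (∏ j ∈ Finset.range n, (α + p + 1 + j))
              / (Nat.factorial p * Nat.factorial n)) := by
    intro i hi
    have hin : i ≤ n := Nat.lt_succ_iff.mp (Finset.mem_range.mp hi)
    simp only [lagC]
    have e1 : p + n - (p + i) = n - i := by omega
    have e2 : p + i - p = i := by omega
    rw [e1, e2]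
    -- product splitting
    have hn : n = i + (n - i) := by omega
    have hsplit : (∏ j ∈ Finset.range n, (α + (p:ℝ) + 1 + j))
        = (∏ j ∈ Finset.range i, (α + (p:ℝ) + 1 + j)) *
          (∏ j ∈ Finset.range (n-i), (α + ((p+i:ℕ):ℝ) + 1 + j)) := by
      calc (∏ j ∈ Finset.range n, (α + (p:ℝ) + 1 + j))
          = ∏ j ∈ Finset.range (i + (n-i)), (α + (p:ℝ) + 1 + j) := by rw [← hn]
        _ = (∏ j ∈ Finset.range i, (α + (p:ℝ) + 1 + j)) *
              ∏ j ∈ Finset.range (n-i), (α + (p:ℝ) + 1 + ((i+j : ℕ):ℝ)) :=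
            Finset.prod_range_add _ _ _
        _ = _ := by
              congr 1
              exact Finset.prod_congr rfl (fun j _ => by push_cast; ring)
    rw [hsplit]
    have hch : (Nat.factorial i : ℝ) * Nat.factorial (n - i) * Nat.choose n i
        = Nat.factorial n := by
      rw [← Nat.choose_mul_factorial_mul_factorial hin]; push_cast; ring
    rw [show ((-1:ℝ))^(p+i) = (-1:ℝ)^p * (-1:ℝ)^i from pow_add _ _ _,
       show ((-2:ℝ))^i = (-1:ℝ)^i * 2^i by rw [neg_pow],
       show ((2:ℝ))^(p+i) = 2^p * 2^i from pow_add _ _ _, ← hch]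
    have hc : ((Nat.choose n i : ℕ) : ℝ) ≠ 0 :=
      Nat.cast_ne_zero.2 (Nat.choose_pos hin).ne'
    field_simp
    ring
  rw [Finset.sum_congr rfl key, ← Finset.sum_mul, ← add_pow]
  simp only [lagC]
  have e1 : p + n - p = n := by omega
  rw [e1]
  rw [show ((-1:ℝ))^(p+n) = (-1:ℝ)^p * (-1:ℝ)^n from pow_add _ _ _,
     show ((-2:ℝ)+1) = -1 by norm_num]
  have h2' := h2 p
  have h2n := h2 n
  field_simp

lemma lag_transform (α : ℝ) (k : ℕ) (z : ℝ) :
    ∑ m ∈ Finset.range (k+1),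
        lagC α k m * 2^m * (Nat.factorial m) * (laguerre α m).eval z
      = (-1:ℝ)^k * (laguerre α k).eval (2*z) := by
  simp only [eval_laguerre]
  -- expand LHS to double sum
  have lhs_eq : ∑ m ∈ Finset.range (k+1),
      lagC α k m * 2^m * (Nat.factorial m) * (∑ p ∈ Finset.range (m+1), lagC α m p * z^p)
      = ∑ m ∈ Finset.range (k+1), ∑ p ∈ Finset.range (m+1),
          lagC α k m * 2^m * (Nat.factorial m) * lagC α m p * z^p := by
    refine Finset.sum_congr rfl (fun m _ => ?_)
    rw [Finset.mul_sum]
    exact Finset.sum_congr rfl (fun p _ => by ring)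
  rw [lhs_eq]
  have swap := Finset.sum_Ico_Ico_comm 0 (k+1)
    (fun p m => lagC α k m * 2^m * (Nat.factorial m) * lagC α m p * z^p)
  simp only [← Finset.range_eq_Ico] at swap
  -- swap : ∑ p ∈ range (k+1), ∑ m ∈ Ico p (k+1), F = ∑ m ∈ range (k+1), ∑ p ∈ range (m+1), F
  rw [← swap]
  rw [Finset.mul_sum]
  refine Finset.sum_congr rfl (fun p hp => ?_)
  have hpk : p ≤ k := Nat.lt_succ_iff.mp (Finset.mem_range.mp hp)
  rw [Finset.sum_Ico_eq_sum_range]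
  have e1 : k + 1 - p = (k - p) + 1 := by omega
  rw [e1]
  obtain ⟨n, rfl⟩ : ∃ n, k = p + n := ⟨k - p, by omega⟩
  have e2 : p + n - p = n := by omega
  rw [e2]
  have := keysum α p n
  calc ∑ i ∈ Finset.range (n+1),
        lagC α (p+n) (p+i) * 2^(p+i) * (Nat.factorial (p+i)) * lagC α (p+i) p * z^p
      = (∑ i ∈ Finset.range (n+1),
          lagC α (p+n) (p+i) * 2^(p+i) * (Nat.factorial (p+i)) * lagC α (p+i) p) * z^p := by
        rw [Finset.sum_mul]
    _ = (-1:ℝ)^(p+n) * lagC α (p+n) p * 2^p * z^p := by rw [this]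
    _ = (-1:ℝ)^(p+n) * (lagC α (p+n) p * (2*z)^p) := by rw [mul_pow]; ring

lemma lag_rec_eval (α : ℝ) (m : ℕ) (z : ℝ) :
    ((m : ℝ)+1) * (laguerre α (m+1)).eval z =
      (α+1+m - z) * (laguerre α m).eval z
        + z * (Polynomial.derivative (laguerre α m)).eval z := by
  have := congrArg (Polynomial.eval z) (lag_rec α m)
  simpa using this

/-- derivative of the Gaussian-side closed form -/
lemma gauss_side_deriv (α c : ℝ) (m : ℕ) {b : ℝ} (hb : 0 < b) :
    HasDerivAt (fun b : ℝ => (-1:ℝ)^m * (Nat.factorial m) * π^(α+1) * b ^ (-(α+1) - m) *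
        (rexp (-c/b) * (laguerre α m).eval (c/b)))
      ((-1:ℝ)^(m+1) * (Nat.factorial (m+1)) * π^(α+1) * b ^ (-(α+1) - (m+1)) *
        (rexp (-c/b) * (laguerre α (m+1)).eval (c/b))) b := by
  have hb' : b ≠ 0 := hb.ne'
  have h1 : HasDerivAt (fun b : ℝ => b ^ (-(α+1) - m : ℝ))
      ((-(α+1) - m) * b ^ ((-(α+1) - m) - 1)) b :=
    Real.hasDerivAt_rpow_const (Or.inl hb')
  have hinv : HasDerivAt (fun b : ℝ => c/b) (-c/b^2) b := by
    simpa [div_eq_mul_inv] using (hasDerivAt_inv hb').const_mul c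
  have hexp : HasDerivAt (fun b : ℝ => rexp (-c/b)) (rexp (-c/b) * (c/b^2)) b := by
    simpa [neg_div] using (hinv.neg).exp
  have hpoly : HasDerivAt (fun b : ℝ => (laguerre α m).eval (c/b))
      ((Polynomial.derivative (laguerre α m)).eval (c/b) * (-c/b^2)) b :=
    (Polynomial.hasDerivAt (laguerre α m) (c/b)).comp b hinv
  have prod := (h1.mul (hexp.mul hpoly)).const_mul ((-1:ℝ)^m * (Nat.factorial m) * π^(α+1))
  refine (prod.congr_of_eventuallyEq (Filter.Eventually.of_forall fun x => ?_)).congr_deriv ?_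
  · simp only [Pi.mul_apply]; ring
  · -- value identity
    symm
    simp only [Pi.mul_apply]
    have hz := lag_rec_eval α m (c/b)
    have hA : b ^ ((-(α+1) - m) - 1 : ℝ) = b ^ (-(α+1) - m : ℝ) / b := by
      rw [Real.rpow_sub hb, Real.rpow_one]
    have hA2 : b ^ (-(α+1) - ((m:ℝ)+1) : ℝ) = b ^ (-(α+1) - m : ℝ) / b := by
      rw [← hA]; congr 1; ring
    rw [hA2, hA]
    have hfac : ((Nat.factorial (m+1) : ℕ) : ℝ) = ((m:ℝ)+1) * (Nat.factorial m : ℝ) := by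
      rw [Nat.factorial_succ]; push_cast; ring
    rw [hfac, pow_succ]
    set A := b ^ (-(α+1) - m : ℝ)
    set E := rexp (-c/b)
    set P := (laguerre α m).eval (c/b)
    set P' := (Polynomial.derivative (laguerre α m)).eval (c/b)
    set Q := (laguerre α (m+1)).eval (c/b)
    linear_combination (-(((-1:ℝ))^m * ((Nat.factorial m : ℕ) : ℝ) * π^(α+1) * A * E) / b) * hz

variable {V : Type*} [NormedAddCommGroup V] [InnerProductSpace ℝ V]
  [FiniteDimensional ℝ V] [MeasurableSpace V] [BorelSpace V]

lemma integrable_pow_gauss (q : ℕ) {a : ℝ} (ha : 0 < a) :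
    Integrable (fun x : V => ‖x‖^q * rexp (-a * ‖x‖^2)) := by
  have base : ∀ {t : ℝ}, 0 < t → Integrable (fun x : V => rexp (-t * ‖x‖^2)) := by
    intro t ht
    have h := (GaussianFourier.integrable_cexp_neg_mul_sq_norm_add (V := V)
      (b := (t:ℂ)) (by simpa using ht) 0 0).norm
    refine h.congr ?_
    refine Filter.Eventually.of_forall (fun x => ?_)
    simp only [Complex.norm_exp]
    congr 1
    simp
    left
    norm_cast
  have hcont : Continuous (fun x : V => ‖x‖^q * rexp (-a * ‖x‖^2)) := by
    fun_prop
  refine Integrable.mono' ((base ha).add (((base (half_pos ha)).const_mul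
    ((Nat.factorial q : ℝ) * (2/a)^q)))) hcont.aestronglyMeasurable ?_
  refine Filter.Eventually.of_forall (fun x => ?_)
  rw [Real.norm_eq_abs, abs_of_nonneg (by positivity)]
  simp only [Pi.add_apply]
  rcases le_total (‖x‖) 1 with h1 | h1
  · have t1 : ‖x‖^q * rexp (-a * ‖x‖^2) ≤ rexp (-a * ‖x‖^2) := by
      nlinarith [pow_le_one₀ (norm_nonneg x) h1 (n := q), Real.exp_pos (-a * ‖x‖^2)]
    have t2 : (0:ℝ) ≤ (Nat.factorial q : ℝ) * (2/a)^q * rexp (-(a/2) * ‖x‖^2) := by positivity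
    linarith
  · have key : ‖x‖^q * rexp (-a * ‖x‖^2)
        ≤ (Nat.factorial q : ℝ) * (2/a)^q * rexp (-(a/2) * ‖x‖^2) := by
      have h2 : ‖x‖^q ≤ (‖x‖^2)^q := by
        rw [← pow_mul]
        exact pow_le_pow_right₀ h1 (by omega)
      have h3 : ((a/2) * ‖x‖^2)^q / (Nat.factorial q : ℝ) ≤ rexp ((a/2) * ‖x‖^2) := by
        have hx : (0:ℝ) ≤ (a/2) * ‖x‖^2 := by positivity
        calc ((a/2) * ‖x‖^2)^q / (Nat.factorial q : ℝ)
            ≤ ∑ i ∈ Finset.range (q+1), ((a/2) * ‖x‖^2)^i / (Nat.factorial i : ℝ) := by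
              refine Finset.single_le_sum (f := fun i => ((a/2) * ‖x‖^2)^i / (Nat.factorial i : ℝ))
                (fun i _ => by positivity) (Finset.self_mem_range_succ q)
          _ ≤ rexp ((a/2) * ‖x‖^2) := Real.sum_le_exp_of_nonneg hx _
      have h4 : (‖x‖^2)^q ≤ (Nat.factorial q : ℝ) * (2/a)^q * rexp ((a/2) * ‖x‖^2) := by
        have hfq : (0:ℝ) < (Nat.factorial q : ℝ) := by positivity
        rw [div_le_iff₀ hfq] at h3
        have expand : ((a/2) * ‖x‖^2)^q = (a/2)^q * (‖x‖^2)^q := mul_pow _ _ _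
        rw [expand] at h3
        have ha2 : (0:ℝ) < (a/2)^q := by positivity
        calc (‖x‖^2)^q = ((a/2)^q * (‖x‖^2)^q) / (a/2)^q := by field_simp
          _ ≤ rexp ((a/2) * ‖x‖^2) * (Nat.factorial q : ℝ) / (a/2)^q := by
              gcongr
          _ = (Nat.factorial q : ℝ) * (2/a)^q * rexp ((a/2) * ‖x‖^2) := by
              rw [div_pow]
              field_simp [ha.ne']
              ring_nf
              rw [← mul_pow, mul_inv_cancel₀ ha.ne', one_pow, one_mul]
      calc ‖x‖^q * rexp (-a * ‖x‖^2) ≤ (‖x‖^2)^q * rexp (-a * ‖x‖^2) := by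
            exact mul_le_mul_of_nonneg_right h2 (Real.exp_pos _).le
        _ ≤ ((Nat.factorial q : ℝ) * (2/a)^q * rexp ((a/2) * ‖x‖^2)) * rexp (-a * ‖x‖^2) :=
            mul_le_mul_of_nonneg_right h4 (Real.exp_pos _).le
        _ = (Nat.factorial q : ℝ) * (2/a)^q * rexp (-(a/2) * ‖x‖^2) := by
            rw [mul_assoc, ← Real.exp_add]
            ring_nf
    have t2 : (0:ℝ) ≤ rexp (-a * ‖x‖^2) := (Real.exp_pos _).le
    linarith

noncomputable def FF (y : V) (m : ℕ) (b : ℝ) (x : V) : ℂ :=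
  Complex.exp (((-2 * π * ⟪x, y⟫ : ℝ) : ℂ) * Complex.I) *
    (((-(‖x‖^2) : ℝ) : ℂ)^m * Complex.exp (-(b:ℂ) * ((‖x‖^2 : ℝ) : ℂ)))

lemma FF_norm (y : V) (m : ℕ) (b : ℝ) (x : V) :
    ‖FF y m b x‖ = ‖x‖^(2*m) * rexp (-b * ‖x‖^2) := by
  unfold FF
  rw [norm_mul, norm_mul, Complex.norm_exp_ofReal_mul_I, one_mul, norm_pow]
  congr 1
  · rw [Complex.norm_real, Real.norm_eq_abs, abs_neg, abs_of_nonneg (by positivity), ← pow_mul]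

  · rw [Complex.norm_exp]
    congr 1
    have : (-(b:ℂ) * ((‖x‖^2 : ℝ) : ℂ)) = (((-b * ‖x‖^2 : ℝ)) : ℂ) := by push_cast; ring
    rw [this, Complex.ofReal_re]

lemma FF_cont (y : V) (m : ℕ) (b : ℝ) : Continuous (FF y m b) := by
  unfold FF
  apply Continuous.mul
  · apply Complex.continuous_exp.comp
    apply Continuous.mul _ continuous_const
    exact Complex.continuous_ofReal.comp
      (continuous_const.mul (continuous_id.inner continuous_const))
  · apply Continuous.mul
    · exact (Complex.continuous_ofReal.comp (by fun_prop)).pow m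
    · apply Complex.continuous_exp.comp
      exact (continuous_const.mul (Complex.continuous_ofReal.comp (by fun_prop)))

lemma FF_integrable (y : V) (m : ℕ) {b : ℝ} (hb : 0 < b) : Integrable (FF y m b) := by
  refine Integrable.mono' (integrable_pow_gauss (2*m) hb) (FF_cont y m b).aestronglyMeasurable ?_
  exact Filter.Eventually.of_forall (fun x => le_of_eq (FF_norm y m b x))

lemma FF_hasDeriv (y : V) (m : ℕ) (t : ℝ) (x : V) :
    HasDerivAt (fun t : ℝ => FF y m t x) (FF y (m+1) t x) t := by
  have h0 : HasDerivAt (fun t : ℝ => ((t : ℝ) : ℂ)) 1 t := by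
    simpa using (hasDerivAt_id t).ofReal_comp
  have h1 : HasDerivAt (fun t : ℝ => -(t:ℂ) * ((‖x‖^2 : ℝ) : ℂ))
      (-1 * ((‖x‖^2 : ℝ) : ℂ)) t := (h0.neg).mul_const _
  have h2 := h1.cexp
  have h3 := h2.const_mul (Complex.exp (((-2 * π * ⟪x, y⟫ : ℝ) : ℂ) * Complex.I) *
    ((-(‖x‖^2) : ℝ) : ℂ)^m)
  have h4 : HasDerivAt (fun s : ℝ => FF y m s x)
      ((Complex.exp (((-2 * π * ⟪x, y⟫ : ℝ) : ℂ) * Complex.I) * ((-(‖x‖^2) : ℝ) : ℂ)^m) *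
        (Complex.exp (-(t:ℂ) * ((‖x‖^2 : ℝ) : ℂ)) * (-1 * ((‖x‖^2 : ℝ) : ℂ)))) t :=
    h3.congr_of_eventuallyEq (Filter.Eventually.of_forall fun s => by unfold FF; ring)
  convert h4 using 1
  unfold FF
  push_cast
  ring

noncomputable def JJ (y : V) (m : ℕ) (b : ℝ) : ℂ := ∫ x : V, FF y m b x

lemma JJ_hasDeriv (y : V) (m : ℕ) {b : ℝ} (hb : 0 < b) :
    HasDerivAt (JJ y m) (JJ y (m+1) b) b := by
  have key := hasDerivAt_integral_of_dominated_loc_of_deriv_le (μ := volume)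
    (F := fun t x => FF y m t x) (F' := fun t x => FF y (m+1) t x)
    (x₀ := b) (s := Metric.ball b (b/2)) (Metric.ball_mem_nhds b (half_pos hb))
    (bound := fun x : V => ‖x‖^(2*(m+1)) * rexp (-(b/2) * ‖x‖^2))
    (Filter.Eventually.of_forall (fun t => (FF_cont y m t).aestronglyMeasurable))
    (FF_integrable y m hb)
    ((FF_cont y (m+1) b).aestronglyMeasurable)
    ?_ (integrable_pow_gauss (2*(m+1)) (half_pos hb)) ?_
  · exact key.2
  · refine Filter.Eventually.of_forall (fun x => fun t ht => ?_)
    rw [FF_norm]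
    have htb : b/2 ≤ t := by
      rw [Metric.mem_ball, Real.dist_eq, abs_lt] at ht
      linarith
    have : rexp (-t * ‖x‖^2) ≤ rexp (-(b/2) * ‖x‖^2) := by
      apply Real.exp_le_exp.mpr
      nlinarith [sq_nonneg ‖x‖]
    exact mul_le_mul_of_nonneg_left this (by positivity)
  · exact Filter.Eventually.of_forall (fun x => fun t _ => FF_hasDeriv y m t x)

noncomputable def gg (α c : ℝ) (m : ℕ) (b : ℝ) : ℝ :=
  (-1:ℝ)^m * (Nat.factorial m) * π^(α+1) * b ^ (-(α+1) - m) *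
    (rexp (-c/b) * (laguerre α m).eval (c/b))

lemma laguerre_zero (α : ℝ) : laguerre α 0 = Polynomial.C 1 := by
  simp [laguerre, lagC]

lemma JJ_eq_gg (y : V) (m : ℕ) {b : ℝ} (hb : 0 < b) :
    JJ y m b = ((gg ((Module.finrank ℝ V : ℝ)/2 - 1) (π^2 * ‖y‖^2) m b : ℝ) : ℂ) := by
  set α : ℝ := (Module.finrank ℝ V : ℝ)/2 - 1 with hα
  set c : ℝ := π^2 * ‖y‖^2 with hc
  induction m generalizing b with
  | zero =>
    have hgauss := fourier_gaussian_innerProductSpace (V := V)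
      (b := (b:ℂ)) (by simpa using hb) y
    have hJ : JJ y 0 b = 𝓕 (fun v : V => Complex.exp (-(b:ℂ) * ‖v‖^2)) y := by
      rw [Real.fourier_eq']
      unfold JJ FF
      refine integral_congr_ae (Filter.Eventually.of_forall (fun x => ?_))
      push_cast
      rw [smul_eq_mul]
      ring
    rw [hJ, hgauss]
    unfold gg
    rw [laguerre_zero]
    simp only [pow_zero, Nat.factorial_zero, Nat.cast_one, Polynomial.eval_C]
    have hpb : (0:ℝ) < π / b := div_pos pi_pos hb
    have h1 : ((π : ℂ) / (b:ℂ)) ^ ((Module.finrank ℝ V : ℂ) / 2)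
        = (((π/b : ℝ) ^ ((Module.finrank ℝ V : ℝ)/2) : ℝ) : ℂ) := by
      rw [Complex.ofReal_cpow hpb.le]
      push_cast
      norm_num
    rw [h1]
    have h2 : (π/b : ℝ) ^ ((Module.finrank ℝ V : ℝ)/2)
        = π^(α+1) * b ^ (-(α+1) - (0:ℕ)) := by
      rw [Real.div_rpow pi_pos.le hb.le]
      rw [show (-(α+1) - ((0:ℕ):ℝ)) = -(α+1) by push_cast; ring]
      rw [Real.rpow_neg hb.le]
      rw [hα]
      ring_nf
    rw [h2]
    have h3 : Complex.exp (-(π:ℂ)^2 * ((‖y‖:ℂ))^2 / (b:ℂ)) = ((rexp (-c/b) : ℝ) : ℂ) := by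
      rw [Complex.ofReal_exp]
      congr 1
      rw [hc]
      push_cast
      ring
    rw [h3]
    push_cast
    ring
  | succ m ih =>
    have hJd := JJ_hasDeriv y m hb
    have hgd : HasDerivAt (fun b : ℝ => ((gg α c m b : ℝ) : ℂ)) ((gg α c (m+1) b : ℝ) : ℂ) b := by
      unfold gg
      rw [show ((m+1:ℕ):ℝ) = (m:ℝ)+1 from by push_cast; ring]
      exact (gauss_side_deriv α c m hb).ofReal_comp
    have heq : (JJ y m) =ᶠ[nhds b] (fun b : ℝ => ((gg α c m b : ℝ) : ℂ)) := by
      filter_upwards [IsOpen.mem_nhds isOpen_Ioi hb] with t ht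
      exact ih ht
    have hJd' : HasDerivAt (fun b : ℝ => ((gg α c m b : ℝ) : ℂ)) (JJ y (m+1) b) b :=
      hJd.congr_of_eventuallyEq heq.symm
    exact hJd'.unique hgd

theorem laguerre_gaussian_fourier_eigenfunction
    (d : ℕ) (hd : 0 < d) (k : ℕ)
    (f : EuclideanSpace ℝ (Fin d) → ℂ)
    (hf : ∀ x, f x =
      (((laguerre ((d : ℝ) / 2 - 1) k).eval (2 * π * ‖x‖ ^ 2) *
        Real.exp (-π * ‖x‖ ^ 2) : ℝ) : ℂ)) :
    ∀ y, 𝓕 f y = (-1 : ℂ) ^ k * f y := by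
  intro y
  set α : ℝ := (d : ℝ)/2 - 1 with hα
  set c : ℝ := π^2 * ‖y‖^2 with hc
  have hfin : (Module.finrank ℝ (EuclideanSpace ℝ (Fin d)) : ℝ) = (d : ℝ) := by
    rw [finrank_euclideanSpace_fin]
  -- expand the Fourier integral as a finite sum of JJ's
  have hsum : 𝓕 f y = ∑ m ∈ Finset.range (k+1),
      ((lagC α k m * (2*π)^m * (-1)^m : ℝ) : ℂ) * JJ y m π := by
    rw [Real.fourier_eq']
    have hint : ∀ x : EuclideanSpace ℝ (Fin d),
        Complex.exp (((-2 * π * ⟪x, y⟫ : ℝ) : ℂ) * Complex.I) • f x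
          = ∑ m ∈ Finset.range (k+1),
              ((lagC α k m * (2*π)^m * (-1)^m : ℝ) : ℂ) * FF y m π x := by
      intro x
      rw [hf x, eval_laguerre α k (2*π*‖x‖^2), smul_eq_mul]
      unfold FF
      push_cast
      rw [Finset.sum_mul, Finset.mul_sum]
      refine Finset.sum_congr rfl fun m _ => ?_
      rw [show (-(((‖x‖:ℂ))^2)) = (-1) * ((‖x‖:ℂ))^2 by ring, mul_pow]
      ring_nf
      rw [show ((-1:ℂ))^(m*2) = 1 by rw [mul_comm m 2, pow_mul]; norm_num]
      ring
    rw [integral_congr_ae (Filter.Eventually.of_forall hint)]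
    rw [integral_finset_sum _ (fun m _ => (FF_integrable y m pi_pos).const_mul _)]
    exact Finset.sum_congr rfl fun m _ => integral_const_mul _ _
  rw [hsum]
  have hJg : ∀ m, JJ y m π = ((gg α c m π : ℝ) : ℂ) := by
    intro m
    rw [JJ_eq_gg y m pi_pos, hfin, ← hα, ← hc]
  simp only [hJg]
  -- now a real computation
  have hgg : ∀ m : ℕ, gg α c m π
      = (-1:ℝ)^m * (Nat.factorial m) * (π^m)⁻¹ * (rexp (-π*‖y‖^2) * (laguerre α m).eval (π*‖y‖^2)) := by
    intro m
    unfold gg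
    have h1 : π^(α+1) * π ^ (-(α+1) - (m:ℝ)) = (π^m)⁻¹ := by
      rw [← Real.rpow_natCast π m, ← Real.rpow_neg pi_pos.le, ← Real.rpow_add pi_pos]
      congr 1
      ring
    have h2 : c/π = π*‖y‖^2 := by rw [hc]; field_simp
    have h3 : -c/π = -(π*‖y‖^2) := by rw [neg_div, h2]
    rw [h2, h3, ← h1]
    ring_nf
  have key : ∑ m ∈ Finset.range (k+1),
      ((lagC α k m * (2*π)^m * (-1)^m : ℝ) : ℂ) * ((gg α c m π : ℝ) : ℂ)
      = (((-1:ℝ)^k * (laguerre α k).eval (2*π*‖y‖^2) * rexp (-π*‖y‖^2) : ℝ) : ℂ) := by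
    have hterm : ∀ m ∈ Finset.range (k+1),
        ((lagC α k m * (2*π)^m * (-1)^m : ℝ) : ℂ) * ((gg α c m π : ℝ) : ℂ)
          = ((lagC α k m * (2*π)^m * (-1)^m * gg α c m π : ℝ) : ℂ) := by
      intro m _
      push_cast
      ring
    rw [Finset.sum_congr rfl hterm, ← Complex.ofReal_sum]
    congr 1
    have hπm : ∀ m : ℕ, (π:ℝ)^m ≠ 0 := fun m => pow_ne_zero m pi_ne_zero
    have hterm2 : ∀ m ∈ Finset.range (k+1),
        lagC α k m * (2*π)^m * (-1)^m * gg α c m π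
          = (lagC α k m * 2^m * (Nat.factorial m) * (laguerre α m).eval (π*‖y‖^2))
              * rexp (-π*‖y‖^2) := by
      intro m _
      rw [hgg m]
      have h4 : ((-1:ℝ))^m * (-1:ℝ)^m = 1 := by rw [← mul_pow]; norm_num
      calc lagC α k m * (2*π)^m * (-1)^m *
            ((-1:ℝ)^m * (Nat.factorial m) * (π^m)⁻¹ * (rexp (-π*‖y‖^2) * (laguerre α m).eval (π*‖y‖^2)))
          = (lagC α k m * 2^m * (Nat.factorial m) * (laguerre α m).eval (π*‖y‖^2))
              * rexp (-π*‖y‖^2) * (π^m * (π^m)⁻¹) * ((-1:ℝ)^m * (-1:ℝ)^m) := by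
            rw [mul_pow]; ring
        _ = _ := by rw [h4, mul_inv_cancel₀ (hπm m)]; ring
    rw [Finset.sum_congr rfl hterm2, ← Finset.sum_mul, lag_transform α k (π*‖y‖^2)]
    ring_nf
  rw [key, hf y]
  push_cast
  ring
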